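/- Let A be an abelian group, B ⊆ A a subgroup such that B is divisible and the quotient A/B is a free abelian group, and let ℓ be a prime. Then the kernel of the canonical map from A to the inverse limit over e of A/ℓ^e·A equals B. -/

import Mathlib

/-!
Elements of `B` are divisible by every power of `ℓ`, so they lie in every `ℓ^e A`. Conversely,
if `a` lies in every `ℓ^e A`, its image in the free group `A ⧸ B` has all coordinates divisible
by every power of `ℓ`, hence zero, so `a ∈ B`.
-/

theorem Int.eq_zero_of_forall_pow_dvd {m n : ℤ} (hm : m.natAbs ≠ 1) (h : ∀ e : ℕ, m ^ e ∣ n) :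
    n = 0 := by
  by_contra hn
  obtain ⟨e, he⟩ := Int.finiteMultiplicity_iff.mpr ⟨hm, hn⟩
  exact he (h (e + 1))

theorem Module.Free.eq_zero_of_forall_exists_pow_smul_eq {M : Type*} [AddCommGroup M]
    [Module.Free ℤ M] {m : ℤ} (hm : m.natAbs ≠ 1) {x : M} (h : ∀ e : ℕ, ∃ y : M, m ^ e • y = x) :
    x = 0 := by
  let b := Module.Free.chooseBasis ℤ M
  refine b.ext_elem fun i => ?_
  rw [map_zero, Finsupp.zero_apply]
  refine Int.eq_zero_of_forall_pow_dvd hm fun e => ?_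
  obtain ⟨y, rfl⟩ := h e
  exact ⟨b.repr y i, by simp⟩

/-- For an abelian group `A`, a divisible subgroup `B` with `A ⧸ B` free abelian,
and a prime `ℓ`, the kernel of the canonical map `A → lim_e A/ℓ^e A` (i.e. the set of `a`
mapping to `0` in every quotient `A ⧸ ℓ^e A`) equals `B`. -/
theorem stmt_0 {A : Type*} [AddCommGroup A] (B : AddSubgroup A) (ℓ : ℕ) (hℓ : ℓ.Prime)
    (hdiv : ∀ b ∈ B, ∀ n : ℕ, 1 ≤ n → ∃ b' ∈ B, n • b' = b)
    (hfree : Module.Free ℤ (A ⧸ B)) (a : A) :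
    (∀ e : ℕ, 1 ≤ e →
      QuotientAddGroup.mk' ((zsmulAddGroupHom ((ℓ : ℤ) ^ e)).range) a = 0) ↔ a ∈ B := by
  simp only [QuotientAddGroup.mk'_apply, QuotientAddGroup.eq_zero_iff, AddMonoidHom.mem_range,
    zsmulAddGroupHom_apply]
  constructor
  · intro h
    have hmk : ∀ e : ℕ, ∃ y : A ⧸ B, (ℓ : ℤ) ^ e • y = (a : A ⧸ B) := by
      intro e
      rcases e.eq_zero_or_pos with rfl | he
      · exact ⟨a, by rw [pow_zero, one_smul]⟩
      obtain ⟨y, rfl⟩ := h e he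
      exact ⟨y, rfl⟩
    rw [← QuotientAddGroup.eq_zero_iff]
    exact Module.Free.eq_zero_of_forall_exists_pow_smul_eq (by simpa using hℓ.ne_one) hmk
  · intro ha e _
    obtain ⟨b, -, rfl⟩ := hdiv a ha (ℓ ^ e) (Nat.one_le_iff_ne_zero.mpr (pow_ne_zero e hℓ.ne_zero))
    exact ⟨b, by rw [← Nat.cast_pow, natCast_zsmul]⟩
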